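/- Assume each X_t is a Banach space. Then the process U(t,τ) is totally dissipative if and only if there exists a uniformly bounded pullback attracting family of compact sets (i.e., 𝕂 ≠ ∅). -/

import Mathlib

open Filter Metric Set Topology

/-- A family of sets is uniformly bounded. -/
def UnifBdd {X : ℝ → Type*} [∀ t, NormedAddCommGroup (X t)] (C : ∀ t, Set (X t)) : Prop :=
  ∃ R > 0, ∀ t, C t ⊆ closedBall (0 : X t) R

/-- Pullback absorbing family for a process `U`. -/
def PullbackAbsorbing {X : ℝ → Type*} [∀ t, NormedAddCommGroup (X t)]
    (U : ∀ t τ : ℝ, X τ → X t) (B : ∀ t, Set (X t)) : Prop :=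
  UnifBdd B ∧ ∀ t : ℝ, ∀ R > 0, ∃ t0 ≤ t, ∀ τ ≤ t0, U t τ '' closedBall 0 R ⊆ B t

/-- Pullback attracting family: every ε-neighborhood family is pullback absorbing. -/
def PullbackAttracting {X : ℝ → Type*} [∀ t, NormedAddCommGroup (X t)]
    (U : ∀ t τ : ℝ, X τ → X t) (K : ∀ t, Set (X t)) : Prop :=
  UnifBdd K ∧ ∀ ε > 0, PullbackAbsorbing U (fun t => thickening ε (K t))

/-- Set of subsequential limits of a sequence. -/
def LimSet {Y : Type*} [NormedAddCommGroup Y] (y : ℕ → Y) : Set Y :=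
  {x | ∃ φ : ℕ → ℕ, StrictMono φ ∧ Tendsto (y ∘ φ) atTop (𝓝 x)}

/-- `A*_t`: union of subsequential limit sets of sequences `U t τₙ xₙ` with
`τₙ → -∞` and `xₙ` uniformly bounded. -/
def AStar {X : ℝ → Type*} [∀ t, NormedAddCommGroup (X t)]
    (U : ∀ t τ : ℝ, X τ → X t) (t : ℝ) : Set (X t) :=
  {x | ∃ (τ : ℕ → ℝ) (xs : ∀ n, X (τ n)),
      Tendsto τ atTop atBot ∧ (∃ R, ∀ n, ‖xs n‖ ≤ R) ∧
      x ∈ LimSet (fun n => U t (τ n) (xs n))}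

/-!
If `K` is a compact attracting family, a finite `ε/2`-net of `K t` gives the finite sets of
`ε`-dissipativity. Conversely, under total dissipativity every pullback sequence `U t τₙ xₙ`
(`τₙ → -∞`, `xₙ` bounded) eventually lies in the `ε`-neighbourhood of a finite set for every
`ε`, so it has a convergent subsequence by completeness; the same finite sets show that the set
`A*_t` of all such limits is totally bounded. Its closure is then compact, and it attracts: a
pullback sequence staying `ε` away from it would have a limit point in it.
-/

theorem IsCompact.exists_finite_subset_thickening_subset {Y : Type*} [PseudoMetricSpace Y]
    {K : Set Y} (hK : IsCompact K) {δ : ℝ} (hδ : 0 < δ) :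
    ∃ F ⊆ K, F.Finite ∧ ∀ ε, thickening ε K ⊆ thickening (ε + δ) F := by
  obtain ⟨F, hFK, hF, hcover⟩ := hK.finite_cover_balls hδ
  rw [← thickening_eq_biUnion_ball] at hcover
  exact ⟨F, hFK, hF, fun ε =>
    (thickening_subset_of_subset ε hcover).trans (thickening_thickening_subset ε δ F)⟩

theorem exists_tendsto_subseq_of_eventually_mem_thickening {Y : Type*} [PseudoMetricSpace Y]
    [CompleteSpace Y] {y : ℕ → Y}
    (h : ∀ ε > 0, ∃ F : Set Y, F.Finite ∧ ∀ᶠ n in atTop, y n ∈ thickening ε F) :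
    ∃ a, ∃ φ : ℕ → ℕ, StrictMono φ ∧ Tendsto (y ∘ φ) atTop (𝓝 a) := by
  have htb : TotallyBounded (range y) := by
    rw [Metric.totallyBounded_iff]
    intro ε hε
    obtain ⟨F, hF, hev⟩ := h ε hε
    obtain ⟨N, hN⟩ := eventually_atTop.1 hev
    refine ⟨F ∪ y '' Iio N, hF.union ((finite_Iio N).image y), ?_⟩
    rw [← thickening_eq_biUnion_ball]
    rintro _ ⟨n, rfl⟩
    rcases lt_or_ge n N with hn | hn
    · exact self_subset_thickening hε _ (Or.inr ⟨n, hn, rfl⟩)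
    · exact thickening_subset_of_subset ε subset_union_left (hN n hn)
  obtain ⟨a, -, φ, hφ, ha⟩ :=
    (htb.closure.isCompact_of_isClosed isClosed_closure).tendsto_subseq fun n =>
      subset_closure (mem_range_self n)
  exact ⟨a, φ, hφ, ha⟩

section

variable {X : ℝ → Type*} [∀ t, NormedAddCommGroup (X t)]

def TotallyDissipative (U : ∀ t τ : ℝ, X τ → X t) : Prop :=
  ∀ ε > (0:ℝ), ∃ F : ∀ t, Set (X t), (∀ t, (F t).Finite) ∧
    PullbackAbsorbing U (fun t => thickening ε (F t))

theorem UnifBdd.mono {C D : ∀ t, Set (X t)} (hD : UnifBdd D) (h : ∀ t, C t ⊆ D t) :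
    UnifBdd C :=
  let ⟨R, hR, hDR⟩ := hD
  ⟨R, hR, fun t => (h t).trans (hDR t)⟩

theorem UnifBdd.thickening {C : ∀ t, Set (X t)} (hC : UnifBdd C) {ε : ℝ} (hε : 0 ≤ ε) :
    UnifBdd fun t => Metric.thickening ε (C t) := by
  obtain ⟨R, hR, hCR⟩ := hC
  refine ⟨ε + R, by positivity, fun t => ?_⟩
  calc Metric.thickening ε (C t) ⊆ Metric.thickening ε (cthickening R {0}) := by
        rw [cthickening_singleton _ hR.le]
        exact thickening_subset_of_subset ε (hCR t)
    _ ⊆ ball 0 (ε + R) := by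
        simpa only [thickening_singleton] using thickening_cthickening_subset ε hR.le {(0 : X t)}
    _ ⊆ closedBall 0 (ε + R) := ball_subset_closedBall

variable {U : ∀ t τ : ℝ, X τ → X t}

theorem PullbackAbsorbing.mono {B B' : ∀ t, Set (X t)} (hB : PullbackAbsorbing U B)
    (h : ∀ t, B t ⊆ B' t) (hB' : UnifBdd B') : PullbackAbsorbing U B' :=
  ⟨hB', fun t R hR =>
    let ⟨t0, ht0, habs⟩ := hB.2 t R hR
    ⟨t0, ht0, fun τ hτ => (habs τ hτ).trans (h t)⟩⟩

theorem PullbackAbsorbing.eventually_mem {B : ∀ t, Set (X t)} (hB : PullbackAbsorbing U B)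
    {ι : Type*} {l : Filter ι} {τ : ι → ℝ} {xs : ∀ i, X (τ i)} (hτ : Tendsto τ l atBot)
    {R : ℝ} (hxs : ∀ i, ‖xs i‖ ≤ R) (t : ℝ) : ∀ᶠ i in l, U t (τ i) (xs i) ∈ B t := by
  obtain ⟨t0, -, habs⟩ := hB.2 t (max R 1) (by positivity)
  filter_upwards [hτ.eventually_le_atBot t0] with i hi
  exact habs _ hi ⟨xs i, mem_closedBall_zero_iff.2 ((hxs i).trans (le_max_left R 1)), rfl⟩

theorem PullbackAbsorbing.aStar_subset_closure {B : ∀ t, Set (X t)}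
    (hB : PullbackAbsorbing U B) (t : ℝ) : AStar U t ⊆ closure (B t) := by
  rintro x ⟨τ, xs, hτ, ⟨R, hR⟩, φ, hφ, hx⟩
  exact mem_closure_of_tendsto hx
    (hB.eventually_mem (xs := fun n => xs (φ n)) (hτ.comp hφ.tendsto_atTop) (fun n => hR (φ n)) t)

theorem PullbackAbsorbing.unifBdd_closure_aStar {B : ∀ t, Set (X t)}
    (hB : PullbackAbsorbing U B) : UnifBdd fun t => closure (AStar U t) :=
  let ⟨R, hR, hBR⟩ := hB.1
  ⟨R, hR, fun t => closure_minimal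
    ((hB.aStar_subset_closure t).trans (closure_minimal (hBR t) isClosed_closedBall))
    isClosed_closedBall⟩

theorem PullbackAttracting.totallyDissipative {K : ∀ t, Set (X t)}
    (hK : PullbackAttracting U K) (hKc : ∀ t, IsCompact (K t)) : TotallyDissipative U := by
  intro ε hε
  choose F hFK hF hKF using fun t => (hKc t).exists_finite_subset_thickening_subset (half_pos hε)
  refine ⟨F, hF, (hK.2 (ε / 2) (half_pos hε)).mono (fun t => ?_) ((hK.1.mono hFK).thickening hε.le)⟩
  simpa only [add_halves] using hKF t (ε / 2)

namespace TotallyDissipative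

variable [∀ t, CompleteSpace (X t)]

theorem exists_mem_limSet (hU : TotallyDissipative U) (t : ℝ) {τ : ℕ → ℝ} {xs : ∀ n, X (τ n)}
    (hτ : Tendsto τ atTop atBot) {R : ℝ} (hxs : ∀ n, ‖xs n‖ ≤ R) :
    ∃ a, a ∈ LimSet fun n => U t (τ n) (xs n) :=
  exists_tendsto_subseq_of_eventually_mem_thickening fun ε hε =>
    let ⟨F, hF, hB⟩ := hU ε hε
    ⟨F t, hF t, hB.eventually_mem hτ hxs t⟩

theorem isCompact_closure_aStar (hU : TotallyDissipative U) (t : ℝ) :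
    IsCompact (closure (AStar U t)) := by
  refine TotallyBounded.isCompact_of_isClosed (TotallyBounded.closure ?_) isClosed_closure
  rw [Metric.totallyBounded_iff]
  intro ε hε
  obtain ⟨F, hF, hB⟩ := hU (ε / 2) (half_pos hε)
  refine ⟨F t, hF t, ?_⟩
  rw [← thickening_eq_biUnion_ball]
  calc AStar U t ⊆ closure (thickening (ε / 2) (F t)) := hB.aStar_subset_closure t
    _ ⊆ cthickening (ε / 2) (F t) := closure_thickening_subset_cthickening _ _
    _ ⊆ thickening ε (F t) := cthickening_subset_thickening' hε (half_lt_self hε) _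

theorem absorbs_thickening_closure_aStar (hU : TotallyDissipative U) {ε : ℝ} (hε : 0 < ε)
    (t R : ℝ) :
    ∃ t0 ≤ t, ∀ τ ≤ t0, U t τ '' closedBall 0 R ⊆ thickening ε (closure (AStar U t)) := by
  by_contra! hcon
  have hbad : ∀ n : ℕ, ∃ τ ≤ min t (-n), ∃ x : X τ,
      ‖x‖ ≤ R ∧ U t τ x ∉ thickening ε (closure (AStar U t)) := by
    intro n
    obtain ⟨τ, hτ, hsub⟩ := hcon _ (min_le_left t (-n))
    obtain ⟨_, ⟨x, hx, rfl⟩, hxK⟩ := not_subset.1 hsub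
    exact ⟨τ, hτ, x, mem_closedBall_zero_iff.1 hx, hxK⟩
  choose τ hτ xs hxs hxsK using hbad
  have hτ_atBot : Tendsto τ atTop atBot :=
    tendsto_atBot_mono (fun n => (hτ n).trans (min_le_right _ _))
      (tendsto_neg_atBot_iff.2 tendsto_natCast_atTop_atTop)
  obtain ⟨a, φ, hφ, ha⟩ := hU.exists_mem_limSet t hτ_atBot hxs
  have haK : a ∈ closure (AStar U t) := subset_closure ⟨τ, xs, hτ_atBot, ⟨R, hxs⟩, φ, hφ, ha⟩
  obtain ⟨n, hn⟩ :=
    (ha.eventually (isOpen_thickening.mem_nhds (self_subset_thickening hε _ haK))).exists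
  exact hxsK (φ n) hn

theorem pullbackAttracting_closure_aStar (hU : TotallyDissipative U) :
    PullbackAttracting U fun t => closure (AStar U t) := by
  obtain ⟨F, -, hB⟩ := hU 1 one_pos
  have hK := hB.unifBdd_closure_aStar
  exact ⟨hK, fun ε hε => ⟨hK.thickening hε.le,
    fun t R _ => hU.absorbs_thickening_closure_aStar hε t R⟩⟩

end TotallyDissipative

end

theorem stmt4_general {X : ℝ → Type*} [∀ t, NormedAddCommGroup (X t)] [∀ t, CompleteSpace (X t)]
    (U : ∀ t τ : ℝ, X τ → X t) :
    (∀ ε > (0:ℝ), ∃ F : ∀ t, Set (X t), (∀ t, (F t).Finite) ∧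
        PullbackAbsorbing U (fun t => thickening ε (F t))) ↔
    ∃ K : ∀ t, Set (X t), (∀ t, IsCompact (K t)) ∧ PullbackAttracting U K :=
  ⟨fun hU => ⟨_, TotallyDissipative.isCompact_closure_aStar hU,
      TotallyDissipative.pullbackAttracting_closure_aStar hU⟩,
    fun ⟨_, hKc, hK⟩ => hK.totallyDissipative hKc⟩

theorem stmt4 {X : ℝ → Type*} [∀ t, NormedAddCommGroup (X t)] [∀ t, CompleteSpace (X t)]
    (U : ∀ t τ : ℝ, X τ → X t)
    (hU1 : ∀ (t : ℝ) (x : X t), U t t x = x)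
    (hU2 : ∀ {t τ σ : ℝ}, σ ≤ τ → τ ≤ t → ∀ x : X σ, U t τ (U τ σ x) = U t σ x) :
    (∀ ε > (0:ℝ), ∃ F : ∀ t, Set (X t), (∀ t, (F t).Finite) ∧
        PullbackAbsorbing U (fun t => thickening ε (F t))) ↔
    ∃ K : ∀ t, Set (X t), (∀ t, IsCompact (K t)) ∧ PullbackAttracting U K :=
  stmt4_general U
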